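/- Every Picard iterate of a one-dimensional differential equation with polynomial vector fields and continuously differentiable drivers is a finite linear combination of iterated integrals of the drivers: if f_1,…,f_n are real polynomials, y_0 ∈ ℝ, and the Picard iterates are defined by Y_0(t) = y_0 and Y_{r+1}(t) = y_0 + Σ_{i=1}^n ∫_0^t f_i(Y_r(s)) (X^{(i)})'(s) ds, then for every r ≥ 1 there exist finitely many words τ with letters in {1,…,n} and real coefficients c_τ (depending on f_1,…,f_n, y_0 and r, but not on t) such that Y_r(t) − y_0 = Σ_τ c_τ · J^τ_{0,t} for all t ∈ [0,T]. -/

import Mathlib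

/-- Iterated integral defined by recursion on the reversed word:
`iterRev X (j :: τ) t = ∫_0^t iterRev X τ s · (X j)'(s) ds`, so that the word is
integrated with its last letter outermost. -/
noncomputable def iterRev {n : ℕ} (X : Fin n → ℝ → ℝ) : List (Fin n) → ℝ → ℝ
  | [] => fun _ => 1
  | j :: τ => fun t => ∫ s in (0:ℝ)..t, iterRev X τ s * deriv (X j) s

/-- `J X τ t` is the iterated integral `J^τ_{0,t}` of the drivers `X` along the word `τ`:
`∫_{0<u₁<⋯<u_k<t} (X^{τ₁})'(u₁)⋯(X^{τ_k})'(u_k) du₁⋯du_k`, with `J X [] t = 1`. -/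
noncomputable def J {n : ℕ} (X : Fin n → ℝ → ℝ) (τ : List (Fin n)) (t : ℝ) : ℝ :=
  iterRev X τ.reverse t

/-!
The finite linear combinations of iterated integrals form a subalgebra of `ℝ → ℝ` that is
stable under `g ↦ ∫₀ᵗ g dX⁽ʲ⁾`: integrating an iterated integral against `X⁽ʲ⁾` appends the
letter `j` to its word, and by integration by parts the product of two iterated integrals is a
sum of integrals of products of shorter words, so induction on the total length applies.
Polynomials of a member of the algebra stay in it, so by induction on `r` every Picard iterate
lies in the algebra.
-/

open Set Submodule

section IteratedIntegrals

variable {n : ℕ} {X : Fin n → ℝ → ℝ}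

variable (X) in
noncomputable def integralAgainst (j : Fin n) (g : ℝ → ℝ) (t : ℝ) : ℝ :=
  ∫ s in (0:ℝ)..t, g s * deriv (X j) s

theorem iterRev_nil : iterRev X [] = 1 :=
  rfl

theorem iterRev_cons (j : Fin n) (τ : List (Fin n)) :
    iterRev X (j :: τ) = integralAgainst X j (iterRev X τ) :=
  rfl

theorem hasDerivAt_integralAgainst (hX : ∀ i, ContDiff ℝ 1 (X i)) (j : Fin n) {g : ℝ → ℝ}
    (hg : Continuous g) (t : ℝ) :
    HasDerivAt (integralAgainst X j g) (g t * deriv (X j) t) t :=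
  (hg.mul ((hX j).continuous_deriv le_rfl)).integral_hasStrictDerivAt 0 t |>.hasDerivAt

theorem continuous_integralAgainst (hX : ∀ i, ContDiff ℝ 1 (X i)) (j : Fin n) {g : ℝ → ℝ}
    (hg : Continuous g) : Continuous (integralAgainst X j g) :=
  continuous_iff_continuousAt.2 fun t =>
    (hasDerivAt_integralAgainst hX j hg t).continuousAt

theorem integralAgainst_zero (j : Fin n) : integralAgainst X j 0 = 0 := by
  ext t
  simp [integralAgainst]

theorem integralAgainst_add (hX : ∀ i, ContDiff ℝ 1 (X i)) (j : Fin n) {g h : ℝ → ℝ}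
    (hg : Continuous g) (hh : Continuous h) :
    integralAgainst X j (g + h) = integralAgainst X j g + integralAgainst X j h := by
  have hdX := (hX j).continuous_deriv le_rfl
  ext t
  simp only [integralAgainst, Pi.add_apply, add_mul]
  exact intervalIntegral.integral_add ((hg.mul hdX).intervalIntegrable 0 t)
    ((hh.mul hdX).intervalIntegrable 0 t)

theorem integralAgainst_smul (j : Fin n) (a : ℝ) (g : ℝ → ℝ) :
    integralAgainst X j (a • g) = a • integralAgainst X j g := by
  ext t
  simp only [integralAgainst, Pi.smul_apply, smul_eq_mul, mul_assoc]
  exact intervalIntegral.integral_const_mul a _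

theorem integralAgainst_zero_right (j : Fin n) (g : ℝ → ℝ) : integralAgainst X j g 0 = 0 :=
  intervalIntegral.integral_same

theorem continuous_iterRev (hX : ∀ i, ContDiff ℝ 1 (X i)) (τ : List (Fin n)) :
    Continuous (iterRev X τ) := by
  induction τ with
  | nil => exact continuous_const
  | cons j τ ih => exact continuous_integralAgainst hX j ih

-- The product rule, integrated from `0`, where both factors vanish.
theorem iterRev_cons_mul_iterRev_cons (hX : ∀ i, ContDiff ℝ 1 (X i)) (a b : Fin n)
    (α β : List (Fin n)) :
    iterRev X (a :: α) * iterRev X (b :: β) =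
      integralAgainst X a (iterRev X α * iterRev X (b :: β)) +
        integralAgainst X b (iterRev X (a :: α) * iterRev X β) := by
  have hα := continuous_iterRev hX α
  have hβ := continuous_iterRev hX β
  have hF := continuous_iterRev hX (a :: α)
  have hG := continuous_iterRev hX (b :: β)
  have hdXa := (hX a).continuous_deriv le_rfl
  have hdXb := (hX b).continuous_deriv le_rfl
  have hderiv : ∀ s, HasDerivAt (iterRev X (a :: α) * iterRev X (b :: β))
      (iterRev X α s * deriv (X a) s * iterRev X (b :: β) s +
        iterRev X (a :: α) s * (iterRev X β s * deriv (X b) s)) s := fun s =>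
    (hasDerivAt_integralAgainst hX a hα s).mul (hasDerivAt_integralAgainst hX b hβ s)
  ext t
  have hFTC := intervalIntegral.integral_eq_sub_of_hasDerivAt (fun s _ => hderiv s)
    ((((hα.mul hdXa).mul hG).add (hF.mul (hβ.mul hdXb))).intervalIntegrable 0 t)
  have hzero : (iterRev X (a :: α) * iterRev X (b :: β)) 0 = 0 := by
    rw [Pi.mul_apply, iterRev_cons a, integralAgainst_zero_right, zero_mul]
  rw [hzero, sub_zero] at hFTC
  rw [← hFTC]
  refine Eq.trans ?_ <| intervalIntegral.integral_add
    (((hα.mul hG).mul hdXa).intervalIntegrable 0 t) (((hF.mul hβ).mul hdXb).intervalIntegrable 0 t)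
  congr 1 with s
  simp only [Pi.mul_apply]
  ring

variable (X) in
def iterRevSpan : Submodule ℝ (ℝ → ℝ) :=
  span ℝ (range (iterRev X))

theorem iterRev_mem_iterRevSpan (τ : List (Fin n)) : iterRev X τ ∈ iterRevSpan X :=
  subset_span (mem_range_self τ)

theorem continuous_of_mem_iterRevSpan (hX : ∀ i, ContDiff ℝ 1 (X i)) {g : ℝ → ℝ}
    (hg : g ∈ iterRevSpan X) : Continuous g := by
  induction hg using span_induction with
  | mem g hg => obtain ⟨τ, rfl⟩ := hg; exact continuous_iterRev hX τ
  | zero => exact continuous_const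
  | add g h _ _ hg hh => exact hg.add hh
  | smul a g _ hg => exact hg.const_smul a

theorem integralAgainst_mem_iterRevSpan (hX : ∀ i, ContDiff ℝ 1 (X i)) (j : Fin n)
    {g : ℝ → ℝ} (hg : g ∈ iterRevSpan X) : integralAgainst X j g ∈ iterRevSpan X := by
  induction hg using span_induction with
  | mem g hg => obtain ⟨τ, rfl⟩ := hg; exact iterRev_mem_iterRevSpan (j :: τ)
  | zero => rw [integralAgainst_zero]; exact zero_mem _
  | add g h hg hh hgj hhj =>
    rw [integralAgainst_add hX j (continuous_of_mem_iterRevSpan hX hg)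
      (continuous_of_mem_iterRevSpan hX hh)]
    exact add_mem hgj hhj
  | smul a g _ hgj => rw [integralAgainst_smul]; exact smul_mem _ a hgj

theorem iterRev_mul_iterRev_mem_iterRevSpan (hX : ∀ i, ContDiff ℝ 1 (X i))
    (α β : List (Fin n)) : iterRev X α * iterRev X β ∈ iterRevSpan X := by
  induction α generalizing β with
  | nil => simpa only [iterRev_nil, one_mul] using iterRev_mem_iterRevSpan β
  | cons a α ihα =>
    induction β with
    | nil => simpa only [iterRev_nil, mul_one] using iterRev_mem_iterRevSpan (a :: α)
    | cons b β ihβ =>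
      rw [iterRev_cons_mul_iterRev_cons hX]
      exact add_mem (integralAgainst_mem_iterRevSpan hX a (ihα _))
        (integralAgainst_mem_iterRevSpan hX b ihβ)

theorem mul_mem_iterRevSpan (hX : ∀ i, ContDiff ℝ 1 (X i)) {g h : ℝ → ℝ}
    (hg : g ∈ iterRevSpan X) (hh : h ∈ iterRevSpan X) : g * h ∈ iterRevSpan X := by
  have hle : iterRevSpan X * iterRevSpan X ≤ iterRevSpan X := by
    rw [iterRevSpan, span_mul_span, span_le]
    rintro _ ⟨_, ⟨α, rfl⟩, _, ⟨β, rfl⟩, rfl⟩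
    exact iterRev_mul_iterRev_mem_iterRevSpan hX α β
  exact hle (mul_mem_mul hg hh)

variable (X) in
noncomputable def iterRevAlgebra (hX : ∀ i, ContDiff ℝ 1 (X i)) : Subalgebra ℝ (ℝ → ℝ) :=
  (iterRevSpan X).toSubalgebra (iterRev_mem_iterRevSpan []) fun _ _ => mul_mem_iterRevSpan hX

theorem exists_finsupp_of_mem_iterRevSpan {g : ℝ → ℝ} (hg : g ∈ iterRevSpan X) :
    ∃ c : List (Fin n) →₀ ℝ, ∀ t, g t = c.sum fun τ a => a * J X τ t := by
  have hrange : range (J X) = range (iterRev X) :=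
    List.reverse_surjective.range_comp (iterRev X)
  rw [iterRevSpan, ← hrange, Finsupp.mem_span_range_iff_exists_finsupp] at hg
  obtain ⟨c, rfl⟩ := hg
  exact ⟨c, fun t => by simp [Finsupp.sum]⟩

end IteratedIntegrals

theorem picard_iterate_eq_linear_combination_of_iterated_integrals_general {n : ℕ}
    (T : ℝ)
    (X : Fin n → ℝ → ℝ) (hX : ∀ i, ContDiff ℝ 1 (X i))
    (f : Fin n → Polynomial ℝ) (y₀ : ℝ)
    (Y : ℕ → ℝ → ℝ)
    (hY0 : ∀ t, Y 0 t = y₀)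
    (hYsucc : ∀ r t, Y (r + 1) t =
      y₀ + ∑ i, ∫ s in (0:ℝ)..t, (f i).eval (Y r s) * deriv (X i) s) :
    ∀ r, 1 ≤ r → ∃ c : List (Fin n) →₀ ℝ,
      ∀ t ∈ Set.Icc (0:ℝ) T, Y r t - y₀ = c.sum (fun τ a => a * J X τ t) := by
  let S := iterRevAlgebra X hX
  have hY : ∀ r, Y r ∈ S := by
    intro r
    induction r with
    | zero =>
      rw [show Y 0 = algebraMap ℝ (ℝ → ℝ) y₀ from funext hY0]
      exact S.algebraMap_mem y₀
    | succ r ih =>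
      have hpicard : Y (r + 1) =
          algebraMap ℝ (ℝ → ℝ) y₀ + ∑ i, integralAgainst X i (Polynomial.aeval (Y r) (f i)) := by
        ext t
        simp [hYsucc, integralAgainst, Finset.sum_apply]
      rw [hpicard]
      have hpoly : ∀ p : Polynomial ℝ, Polynomial.aeval (Y r) p ∈ S := fun p =>
        Algebra.adjoin_le (singleton_subset_iff.2 ih) (Polynomial.aeval_mem_adjoin_singleton ℝ _)
      exact add_mem (S.algebraMap_mem y₀)
        (sum_mem fun i _ => integralAgainst_mem_iterRevSpan hX i (hpoly (f i)))
  intro r _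
  obtain ⟨c, hc⟩ := exists_finsupp_of_mem_iterRevSpan (sub_mem (hY r) (S.algebraMap_mem y₀))
  exact ⟨c, fun t _ => hc t⟩

/-- Every Picard iterate (from the first one on) of a one-dimensional
differential equation `dY = Σᵢ fᵢ(Y) dX⁽ⁱ⁾` with polynomial vector fields and C¹ drivers is,
up to the initial value, a finite linear combination of iterated integrals of the drivers. -/
theorem picard_iterate_eq_linear_combination_of_iterated_integrals {n : ℕ} (hn : 1 ≤ n)
    (T : ℝ) (hT : 0 < T)
    (X : Fin n → ℝ → ℝ) (hX : ∀ i, ContDiff ℝ 1 (X i))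
    (f : Fin n → Polynomial ℝ) (y₀ : ℝ)
    (Y : ℕ → ℝ → ℝ)
    (hY0 : ∀ t, Y 0 t = y₀)
    (hYsucc : ∀ r t, Y (r + 1) t =
      y₀ + ∑ i, ∫ s in (0:ℝ)..t, (f i).eval (Y r s) * deriv (X i) s) :
    ∀ r, 1 ≤ r → ∃ c : List (Fin n) →₀ ℝ,
      ∀ t ∈ Set.Icc (0:ℝ) T, Y r t - y₀ = c.sum (fun τ a => a * J X τ t) :=
  picard_iterate_eq_linear_combination_of_iterated_integrals_general T X hX f y₀ Y hY0 hYsucc
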